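/- Let m ≥ 2 be an integer, let p₁ : ℝ → ℝ be 2π-periodic and C³, and let u₁ : ℝ → ℝ be 2π-periodic and continuous, and set P₁ := 1 + ε p₁, U₁(t) := t + ε u₁(t), U₁⁺(t) := U₁(t + 2π/m). Then, uniformly in t ∈ ℝ as ε → 0⁺: 2 · L_{P₁}(U₁(t), U₁⁺(t)) · ∂₁L_{P₁}(U₁(t), U₁⁺(t)) = −2 sin(2π/m) + 2ε [ p₁'(t) − p₁'(t + 2π/m) cos(2π/m) + ( u₁(t) − u₁(t + 2π/m) ) cos(2π/m) − ( p₁(t + 2π/m) + p₁(t) + p₁''(t) ) sin(2π/m) ] + O(ε²). -/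

import Mathlib

/-!
In the frame `e(t) = (cos t, sin t)`, `e'(t)`, the chord `γ(t) - γ(t')` of the curve
`γ = p e + p' e'` with support function `p` has coordinates
`A = p t - p t' cos (t - t') - p' t' sin (t - t')` and
`B = p' t + p t' sin (t - t') - p' t' cos (t - t')`, so `L_p = √(A² + B²)`.
Since `∂₁A = B` and `∂₁B = p t + p'' t - A`, there is the exact identity
`2 L_p ∂₁L_p = 2 (p + p'')(t) B` wherever `A ≠ 0`.

For `P₁ = 1 + ε p₁` at the perturbed points, `A` tends to `1 - cos (2π/m) > 0`, and
`2 (1 + ε (p₁ + p₁'')) B` minus its first-order part is a sum of `ε` times increments of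
`p₁, p₁', p₁'', sin, cos` over displacements of size `O(ε)`, plus the second-order Taylor remainder
of `sin`. Periodicity makes every bound uniform in `t`; this uniformity is expressed by working
along the filter `𝓝 0 ×ˢ ⊤` in `(ε, t)`.
-/

open Real

/-- The generating function `L_p(t,t')` of the billiard in the convex domain
with support function `p`. -/
noncomputable def genfun (p : ℝ → ℝ) (t t' : ℝ) : ℝ :=
  Real.sqrt (p t ^ 2 + deriv p t ^ 2 + p t' ^ 2 + deriv p t' ^ 2
    - 2 * p t * p t' * Real.cos (t - t')
    - 2 * p t * deriv p t' * Real.sin (t - t')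
    + 2 * deriv p t * p t' * Real.sin (t - t')
    - 2 * deriv p t * deriv p t' * Real.cos (t - t'))

open Filter Topology Asymptotics Function

section GeneratingFunction

variable {p : ℝ → ℝ} {t t' : ℝ}

lemma genfun_eq_sqrt (p : ℝ → ℝ) (t t' : ℝ) :
    genfun p t t' = √((p t - p t' * cos (t - t') - deriv p t' * sin (t - t')) ^ 2
      + (deriv p t + p t' * sin (t - t') - deriv p t' * cos (t - t')) ^ 2) := by
  unfold genfun
  congr 1
  linear_combination (-(p t' ^ 2 + deriv p t' ^ 2)) * sin_sq_add_cos_sq (t - t')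

lemma hasDerivAt_genfun (hp : DifferentiableAt ℝ p t) (hp' : DifferentiableAt ℝ (deriv p) t)
    (hA : p t - p t' * cos (t - t') - deriv p t' * sin (t - t') ≠ 0) :
    HasDerivAt (fun s => genfun p s t')
      ((p t + deriv (deriv p) t) * (deriv p t + p t' * sin (t - t') - deriv p t' * cos (t - t'))
        / genfun p t t') t := by
  have hd : HasDerivAt (fun s => s - t') 1 t := (hasDerivAt_id t).sub_const t'
  have hA' : HasDerivAt (fun s => p s - p t' * cos (s - t') - deriv p t' * sin (s - t'))
      (deriv p t + p t' * sin (t - t') - deriv p t' * cos (t - t')) t :=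
    ((hp.hasDerivAt.sub (hd.cos.const_mul (p t'))).sub (hd.sin.const_mul (deriv p t'))).congr_deriv
      (by ring)
  have hB' : HasDerivAt (fun s => deriv p s + p t' * sin (s - t') - deriv p t' * cos (s - t'))
      (deriv (deriv p) t + p t' * cos (t - t') + deriv p t' * sin (t - t')) t :=
    ((hp'.hasDerivAt.add (hd.sin.const_mul (p t'))).sub (hd.cos.const_mul (deriv p t'))).congr_deriv
      (by ring)
  simp_rw [genfun_eq_sqrt]
  refine (((hA'.pow 2).add (hB'.pow 2)).sqrt
    (add_pos_of_pos_of_nonneg (sq_pos_of_ne_zero hA) (sq_nonneg _)).ne').congr_deriv ?_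
  simp only [Pi.add_apply, Pi.pow_apply]
  field_simp
  ring

lemma two_mul_genfun_mul_deriv (hp : DifferentiableAt ℝ p t)
    (hp' : DifferentiableAt ℝ (deriv p) t)
    (hA : p t - p t' * cos (t - t') - deriv p t' * sin (t - t') ≠ 0) :
    2 * genfun p t t' * deriv (fun s => genfun p s t') t
      = 2 * (p t + deriv (deriv p) t)
        * (deriv p t + p t' * sin (t - t') - deriv p t' * cos (t - t')) := by
  have hL : genfun p t t' ≠ 0 := by
    rw [genfun_eq_sqrt]
    exact (Real.sqrt_pos.2 (by positivity)).ne'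
  rw [(hasDerivAt_genfun hp hp' hA).deriv]
  field_simp

end GeneratingFunction

lemma deriv_one_add_const_mul {p : ℝ → ℝ} (ε : ℝ) (hp : Differentiable ℝ p) :
    deriv (fun s => 1 + ε * p s) = fun s => ε * deriv p s := by
  funext s
  simp [hp s]

lemma two_mul_genfun_one_add_mul_mul_deriv {p : ℝ → ℝ} {ε t t' : ℝ} (hp : Differentiable ℝ p)
    (hp' : Differentiable ℝ (deriv p))
    (hA : 1 + ε * p t - (1 + ε * p t') * cos (t - t') - ε * deriv p t' * sin (t - t') ≠ 0) :
    2 * genfun (fun s => 1 + ε * p s) t t'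
        * deriv (fun s => genfun (fun s' => 1 + ε * p s') s t') t
      = 2 * (1 + ε * (p t + deriv (deriv p) t))
        * (ε * deriv p t + (1 + ε * p t') * sin (t - t') - ε * deriv p t' * cos (t - t')) := by
  have h1 := deriv_one_add_const_mul ε hp
  have h2 : deriv (fun s => ε * deriv p s) = fun s => ε * deriv (deriv p) s := by
    funext s
    simp [hp' s]
  have hP : DifferentiableAt ℝ (deriv fun s => 1 + ε * p s) t := by
    rw [h1]
    exact (hp' t).const_mul ε
  rw [two_mul_genfun_mul_deriv (((hp t).const_mul ε).const_add 1) hP (by simpa [h1] using hA),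
    h1, h2]
  ring

section Asymptotics

variable {α : Type*} {l : Filter α}

section Periodic

variable {f : ℝ → ℝ} {c : ℝ}

theorem Function.Periodic.deriv (h : Periodic f c) : Periodic (deriv f) c := fun x => by
  rw [← deriv_comp_add_const, show (fun x => f (x + c)) = f from funext h]

theorem Function.Periodic.isBigO_one_comp {E : Type*} [SeminormedAddCommGroup E] {f : ℝ → E}
    (h : Periodic f c) (hc : c ≠ 0) (hf : Continuous f)
    (a : α → ℝ) : (fun x => f (a x)) =O[l] (fun _ => (1 : ℝ)) := by
  obtain ⟨C, hC⟩ := (h.isBounded_of_continuous hc hf).exists_norm_le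
  exact IsBigO.of_bound C (Eventually.of_forall fun x => by simpa using hC _ ⟨a x, rfl⟩)

theorem LipschitzWith.isBigO_comp_sub {E : Type*} [SeminormedAddCommGroup E] {f : ℝ → E}
    {K : NNReal} (hf : LipschitzWith K f) (a b : α → ℝ) :
    (fun x => f (a x) - f (b x)) =O[l] (fun x => a x - b x) :=
  IsBigO.of_bound K (Eventually.of_forall fun x => by
    simpa [dist_eq_norm] using hf.dist_le_mul (a x) (b x))

theorem Asymptotics.IsBigO.mul_isBigO_one {f g k : α → ℝ} (hf : f =O[l] g)
    (hk : k =O[l] (fun _ => (1 : ℝ))) : (fun x => f x * k x) =O[l] g := by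
  simpa using hf.mul hk

theorem Function.Periodic.exists_lipschitzWith (h : Periodic f c) (hc : c ≠ 0)
    (hf : ContDiff ℝ 1 f) : ∃ K, LipschitzWith K f := by
  obtain ⟨C, hC⟩ :=
    (h.deriv.isBounded_of_continuous hc (hf.continuous_deriv le_rfl)).exists_norm_le
  refine ⟨C.toNNReal, lipschitzWith_of_nnnorm_deriv_le (hf.differentiable one_ne_zero) fun x => ?_⟩
  rw [← NNReal.coe_le_coe, coe_nnnorm]
  exact (hC _ ⟨x, rfl⟩).trans (le_max_left _ _)

theorem Function.Periodic.isBigO_comp_sub (h : Periodic f c) (hc : c ≠ 0)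
    (hf : ContDiff ℝ 1 f) (a b : α → ℝ) :
    (fun x => f (a x) - f (b x)) =O[l] (fun x => a x - b x) := by
  obtain ⟨K, hK⟩ := h.exists_lipschitzWith hc hf
  exact hK.isBigO_comp_sub a b

end Periodic

theorem isBigO_sin_add_sub_sub_mul_cos (y : ℝ) :
    (fun h => sin (y + h) - sin y - h * cos y) =O[𝓝 0] (fun h => h ^ 2) := by
  refine IsBigO.of_bound 1 ?_
  filter_upwards [Metric.ball_mem_nhds (0 : ℝ) zero_lt_one] with h hh
  rw [Metric.mem_ball, dist_zero_right, norm_eq_abs] at hh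
  have hcos : |cos h - 1| ≤ h ^ 2 / 2 := by
    rw [abs_sub_comm, abs_of_nonneg (sub_nonneg.2 (cos_le_one h))]
    linarith [one_sub_sq_div_two_le_cos (x := h)]
  have hsin : |sin h - h| ≤ h ^ 2 / 2 := by
    rw [abs_sub_comm]
    refine (abs_sub_sin_le h).trans ?_
    rw [← sq_abs h]
    nlinarith [abs_nonneg h]
  have key : sin (y + h) - sin y - h * cos y = sin y * (cos h - 1) + cos y * (sin h - h) := by
    rw [sin_add]; ring
  rw [key, norm_eq_abs, norm_eq_abs, abs_of_nonneg (sq_nonneg h), one_mul]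
  calc |sin y * (cos h - 1) + cos y * (sin h - h)|
      ≤ |sin y| * |cos h - 1| + |cos y| * |sin h - h| := by
        rw [← abs_mul, ← abs_mul]; exact abs_add_le _ _
    _ ≤ 1 * (h ^ 2 / 2) + 1 * (h ^ 2 / 2) := by
        gcongr
        exacts [abs_sin_le_one y, abs_cos_le_one y]
    _ = h ^ 2 := by ring

variable {ε d s s' t : α → ℝ} {δ c : ℝ} {p : ℝ → ℝ}

theorem isBigO_sin_add_sin (hd : (fun x => d x + δ) =O[l] ε) :
    (fun x => sin (d x) + sin δ) =O[l] ε :=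
  (lipschitzWith_sin.isBigO_comp_sub d fun _ => -δ).trans (by simpa using hd)
    |>.congr_left fun x => by simp

theorem isBigO_cos_sub_cos (hd : (fun x => d x + δ) =O[l] ε) :
    (fun x => cos (d x) - cos δ) =O[l] ε :=
  (lipschitzWith_cos.isBigO_comp_sub d fun _ => -δ).trans (by simpa using hd)
    |>.congr_left fun x => by simp

theorem isBigO_sin_add_sin_sub_mul_cos (hε : Tendsto ε l (𝓝 0))
    (hd : (fun x => d x + δ) =O[l] ε) :
    (fun x => sin (d x) + sin δ - (d x + δ) * cos δ) =O[l] (fun x => ε x ^ 2) :=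
  ((isBigO_sin_add_sub_sub_mul_cos (-δ)).comp_tendsto (hd.trans_tendsto hε)).trans (hd.pow 2)
    |>.congr_left fun x => by simp

theorem eventually_one_add_mul_sub_ne_zero (hε : Tendsto ε l (𝓝 0))
    (hd : (fun x => s x - s' x + δ) =O[l] ε) (hp : ContDiff ℝ 1 p) (hper : Periodic p c)
    (hc : c ≠ 0) (hδ : cos δ ≠ 1) :
    ∀ᶠ x in l, 1 + ε x * p (s x) - (1 + ε x * p (s' x)) * cos (s x - s' x)
      - ε x * deriv p (s' x) * sin (s x - s' x) ≠ 0 := by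
  have hcos := cos_periodic.isBigO_one_comp two_pi_pos.ne' continuous_cos (l := l)
    (fun x => s x - s' x)
  have hsin := sin_periodic.isBigO_one_comp two_pi_pos.ne' continuous_sin (l := l)
    (fun x => s x - s' x)
  have hbdd : (fun x => p (s x) - p (s' x) * cos (s x - s' x)
      - deriv p (s' x) * sin (s x - s' x)) =O[l] (fun _ => (1 : ℝ)) :=
    ((hper.isBigO_one_comp hc hp.continuous s).sub
      ((hper.isBigO_one_comp hc hp.continuous s').mul_isBigO_one hcos)).sub
      ((hper.deriv.isBigO_one_comp hc (hp.continuous_deriv le_rfl) s').mul_isBigO_one hsin)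
  have hlim : Tendsto (fun x => 1 + ε x * p (s x) - (1 + ε x * p (s' x)) * cos (s x - s' x)
      - ε x * deriv p (s' x) * sin (s x - s' x)) l (𝓝 (1 - cos δ)) := by
    rw [← tendsto_sub_const_iff (1 - cos δ), sub_self]
    refine ((isBigO_cos_sub_cos hd).neg_left.add ((isBigO_refl ε l).mul_isBigO_one hbdd)
      |>.trans_tendsto hε).congr fun x => ?_
    ring
  exact hlim.eventually_ne (sub_ne_zero.2 hδ.symm)

theorem isBigO_expansion_remainder (hε : Tendsto ε l (𝓝 0))
    (hs : (fun x => s x - t x) =O[l] ε) (hs' : (fun x => s' x - (t x + δ)) =O[l] ε)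
    (hp : ContDiff ℝ 3 p) (hper : Periodic p c) (hc : c ≠ 0) :
    (fun x => 2 * (1 + ε x * (p (s x) + deriv (deriv p) (s x)))
        * (ε x * deriv p (s x) + (1 + ε x * p (s' x)) * sin (s x - s' x)
          - ε x * deriv p (s' x) * cos (s x - s' x))
      - (-2 * sin δ + 2 * ε x * (deriv p (t x) - deriv p (t x + δ) * cos δ
          - (p (t x + δ) + p (t x) + deriv (deriv p) (t x)) * sin δ)
        + 2 * (s x - s' x + δ) * cos δ)) =O[l] (fun x => ε x ^ 2) := by
  have hp₀ : ContDiff ℝ 1 p := hp.of_le (by norm_num)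
  have hp₁ : ContDiff ℝ 1 (deriv p) := (hp.deriv' (n := 2)).of_le (by norm_num)
  have hp₂ : ContDiff ℝ 1 (deriv (deriv p)) := hp.deriv'.deriv'
  have hper₁ := hper.deriv
  have hper₂ := hper₁.deriv
  have bdd {f : ℝ → ℝ} (hf : ContDiff ℝ 1 f) (hfper : Periodic f c) (a : α → ℝ) :
      (fun x => f (a x)) =O[l] (fun _ => (1 : ℝ)) :=
    hfper.isBigO_one_comp hc hf.continuous a
  have lip {f : ℝ → ℝ} (hf : ContDiff ℝ 1 f) (hfper : Periodic f c) {a b : α → ℝ}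
      (hab : (fun x => a x - b x) =O[l] ε) : (fun x => f (a x) - f (b x)) =O[l] ε :=
    (hfper.isBigO_comp_sub hc hf a b).trans hab
  have hd : (fun x => s x - s' x + δ) =O[l] ε := (hs.sub hs').congr_left fun x => by ring
  have hσ := isBigO_sin_add_sin (d := fun x => s x - s' x) hd
  have hκ := isBigO_cos_sub_cos (d := fun x => s x - s' x) hd
  have hσ₁ := sin_periodic.isBigO_one_comp two_pi_pos.ne' continuous_sin (l := l)
    (fun x => s x - s' x)
  have hκ₁ := cos_periodic.isBigO_one_comp two_pi_pos.ne' continuous_cos (l := l)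
    (fun x => s x - s' x)
  set B := fun x => ε x * deriv p (s x) + (1 + ε x * p (s' x)) * sin (s x - s' x)
    - ε x * deriv p (s' x) * cos (s x - s' x) with hBdef
  have hB : (fun x => B x + sin δ) =O[l] ε :=
    ((isBigO_refl ε l).mul_isBigO_one ((bdd hp₁ hper₁ s).add
      (((bdd hp₀ hper s').mul_isBigO_one hσ₁).sub ((bdd hp₁ hper₁ s').mul_isBigO_one hκ₁)))).add hσ
      |>.congr_left fun x => by simp only [hBdef]; ring
  have hB₁ : B =O[l] (fun _ => (1 : ℝ)) :=
    ((hB.trans (hε.isBigO_one ℝ)).sub (isBigO_const_one ℝ (sin δ) l)).congr_left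
      fun x => by ring
  have hX : (fun x => (deriv p (s x) - deriv p (t x))
      + ((p (s' x) - p (t x + δ)) * sin (s x - s' x) + (sin (s x - s' x) + sin δ) * p (t x + δ))
      - ((deriv p (s' x) - deriv p (t x + δ)) * cos (s x - s' x)
        + (cos (s x - s' x) - cos δ) * deriv p (t x + δ))
      + ((p (s x) - p (t x) + (deriv (deriv p) (s x) - deriv (deriv p) (t x))) * B x
        + (B x + sin δ) * (p (t x) + deriv (deriv p) (t x)))) =O[l] ε := by
    refine (((lip hp₁ hper₁ hs).add ?_).sub ?_).add ?_
    · exact ((lip hp₀ hper hs').mul_isBigO_one hσ₁).add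
        (hσ.mul_isBigO_one (bdd hp₀ hper fun x => t x + δ))
    · exact ((lip hp₁ hper₁ hs').mul_isBigO_one hκ₁).add
        (hκ.mul_isBigO_one (bdd hp₁ hper₁ fun x => t x + δ))
    · exact (((lip hp₀ hper hs).add (lip hp₂ hper₂ hs)).mul_isBigO_one hB₁).add
        (hB.mul_isBigO_one ((bdd hp₀ hper t).add (bdd hp₂ hper₂ t)))
  -- The remainder is `2 (sin (s - s') + sin δ - (s - s' + δ) cos δ) + 2 ε X`.
  have hεX := ((isBigO_refl ε l).mul hX).congr_right fun x => (sq (ε x)).symm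
  refine ((isBigO_sin_add_sin_sub_mul_cos (d := fun x => s x - s' x) hε hd).const_mul_left 2
    |>.add (hεX.const_mul_left 2)).congr (fun x => ?_) (fun x => ?_)
  · simp only [hBdef]; ring
  · ring

end Asymptotics

theorem exists_pos_forall_of_eventually_nhds_zero_prod_top {β : Type*} {P : ℝ × β → Prop}
    (h : ∀ᶠ x in 𝓝 (0 : ℝ) ×ˢ (⊤ : Filter β), P x) :
    ∃ ε₁ > 0, ∀ ε, |ε| ≤ ε₁ → ∀ t, P (ε, t) := by
  rw [prod_top, eventually_comap, Metric.nhds_basis_closedBall.eventually_iff] at h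
  obtain ⟨r, hr, h⟩ := h
  exact ⟨r, hr, fun ε hε t => h (by simpa using hε) (ε, t) rfl⟩

theorem cos_two_pi_div_ne_one {m : ℕ} (hm : 2 ≤ m) : cos (2 * π / m) ≠ 1 := by
  have hm' : (2 : ℝ) ≤ m := by exact_mod_cast hm
  have hpos : 0 < 2 * π / m := by positivity
  have hle : 2 * π / m ≤ π := by
    rw [div_le_iff₀ (by linarith)]
    nlinarith [pi_pos]
  rw [Ne, cos_eq_one_iff_of_lt_of_lt (by linarith) (by linarith [pi_pos])]
  exact hpos.ne'

/-- First-order expansion of `2·L_{P₁}·∂₁L_{P₁}` along the perturbed circle: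
with `P₁ = 1 + εp₁`, `U₁(t) = t + εu₁(t)`, `U₁⁺(t) = U₁(t + 2π/m)`,
`2 L_{P₁}(U₁(t),U₁⁺(t)) ∂₁L_{P₁}(U₁(t),U₁⁺(t)) = −2 sin(2π/m) + 2ε[...] + O(ε²)`
uniformly in `t`. -/
theorem stmt_8 (m : ℕ) (hm : 2 ≤ m) (p₁ u₁ : ℝ → ℝ)
    (hp : ContDiff ℝ 3 p₁) (hpper : ∀ t, p₁ (t + 2 * π) = p₁ t)
    (hu : Continuous u₁) (huper : ∀ t, u₁ (t + 2 * π) = u₁ t) :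
    ∃ C > 0, ∃ ε₁ > 0, ∀ ε : ℝ, 0 ≤ ε → ε ≤ ε₁ → ∀ t : ℝ,
      |2 * genfun (fun s => 1 + ε * p₁ s) (t + ε * u₁ t)
            ((t + 2 * π / m) + ε * u₁ (t + 2 * π / m))
          * deriv (fun s => genfun (fun s' => 1 + ε * p₁ s') s
              ((t + 2 * π / m) + ε * u₁ (t + 2 * π / m))) (t + ε * u₁ t)
        - (-2 * Real.sin (2 * π / m)
            + 2 * ε * (deriv p₁ t - deriv p₁ (t + 2 * π / m) * Real.cos (2 * π / m)
              + (u₁ t - u₁ (t + 2 * π / m)) * Real.cos (2 * π / m)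
              - (p₁ (t + 2 * π / m) + p₁ t + deriv (deriv p₁) t) * Real.sin (2 * π / m)))|
        ≤ C * ε ^ 2 := by
  set δ := 2 * π / m
  have hε : Tendsto Prod.fst (𝓝 (0 : ℝ) ×ˢ (⊤ : Filter ℝ)) (𝓝 0) := tendsto_fst
  have hdisp (a : ℝ) : (fun x : ℝ × ℝ => x.2 + a + x.1 * u₁ (x.2 + a) - (x.2 + a))
      =O[𝓝 (0 : ℝ) ×ˢ (⊤ : Filter ℝ)] Prod.fst :=
    ((isBigO_refl Prod.fst _).mul_isBigO_one
      (Function.Periodic.isBigO_one_comp huper two_pi_pos.ne' hu _)).congr_left fun x => by ring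
  have hs : (fun x : ℝ × ℝ => x.2 + x.1 * u₁ x.2 - x.2)
      =O[𝓝 (0 : ℝ) ×ˢ (⊤ : Filter ℝ)] Prod.fst :=
    (hdisp 0).congr_left fun x => by simp
  obtain ⟨C, hC, hbound⟩ :=
    (isBigO_expansion_remainder hε hs (hdisp δ) hp hpper two_pi_pos.ne').exists_pos
  have hne := eventually_one_add_mul_sub_ne_zero (s := fun x => x.2 + x.1 * u₁ x.2)
    (s' := fun x => x.2 + δ + x.1 * u₁ (x.2 + δ)) hε
    ((hs.sub (hdisp δ)).congr_left fun x => by ring)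
    (hp.of_le (by norm_num)) hpper two_pi_pos.ne' (cos_two_pi_div_ne_one hm)
  obtain ⟨ε₁, hε₁, h⟩ := exists_pos_forall_of_eventually_nhds_zero_prod_top (hbound.bound.and hne)
  refine ⟨C, hC, ε₁, hε₁, fun ε hε0 hεle t => ?_⟩
  obtain ⟨hle, hA⟩ := h ε (by rwa [abs_of_nonneg hε0]) t
  dsimp only at hle hA
  rw [norm_eq_abs, norm_eq_abs, abs_of_nonneg (sq_nonneg ε)] at hle
  rw [two_mul_genfun_one_add_mul_mul_deriv (hp.differentiable (by norm_num))
    ((hp.deriv' (n := 2)).differentiable (by norm_num)) hA]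
  convert hle using 2
  ring
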